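/- arXiv:1903.08870 — 8 statements merged into one kernel-verified Lean document; each statement's English description precedes it below -/
import Mathlib

section
/- If (ρ₀, ρ₁) is a representation of a Hom-Lie antialgebra (𝔞, α, β) on a Hom-super vector space (V, α_{V₀}, β_{V₁}), then the direct sum 𝔞 ⊕ V with structure maps (α+α_{V₀})(x,u) = (α(x), α_{V₀}(u)), (β+β_{V₁})(y,w) = (β(y), β_{V₁}(w)) and operations (x₁,u₁)·(x₂,u₂) = (x₁·x₂, ρ₀(x₁)(u₂) + ρ₀(x₂)(u₁)), (x₁,u₁)·(y₁,w₁) = (x₁·y₁, ρ₀(x₁)(w₁) + ρ₁(y₁)(u₁)), [(y₁,w₁),(y₂,w₂)] = ([y₁,y₂], ρ₁(y₁)(w₂) − ρ₁(y₂)(w₁)) is a Hom-Lie antialgebra. -/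
/-- A (multiplicative) Hom-Lie antialgebra over a field `k` of characteristic zero.
`A0` is the even part, `A1` the odd part; `mul` is the product on `A0`,
`act` the action of `A0` on `A1`, `br` the bracket on `A1` valued in `A0`,
and `a`, `b` the structure maps `α, β`. -/
structure HLA (k : Type*) [Field k] [CharZero k]
    (A0 A1 : Type*) [AddCommGroup A0] [Module k A0]
    [AddCommGroup A1] [Module k A1] where
  mul : A0 →ₗ[k] A0 →ₗ[k] A0
  act : A0 →ₗ[k] A1 →ₗ[k] A1
  br : A1 →ₗ[k] A1 →ₗ[k] A0
  a : A0 →ₗ[k] A0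
  b : A1 →ₗ[k] A1
  mul_comm' : ∀ x y, mul x y = mul y x
  br_skew : ∀ y z, br y z = - br z y
  ax1 : ∀ x1 x2 x3, mul (a x1) (mul x2 x3) = mul (mul x1 x2) (a x3)
  ax2 : ∀ x1 x2 y1, act (a x1) (act x2 y1) = (2⁻¹ : k) • act (mul x1 x2) (b y1)
  ax3 : ∀ x1 y1 y2, mul (a x1) (br y1 y2) = br (act x1 y1) (b y2) + br (b y1) (act x1 y2)
  ax4 : ∀ y1 y2 y3,
    act (br y2 y3) (b y1) + act (br y3 y1) (b y2) + act (br y1 y2) (b y3) = 0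
  m1 : ∀ x1 x2, a (mul x1 x2) = mul (a x1) (a x2)
  m2 : ∀ x y, b (act x y) = act (a x) (b y)
  m3 : ∀ y1 y2, a (br y1 y2) = br (b y1) (b y2)

/-- A representation of a Hom-Lie antialgebra `L` on a Hom-super vector space
`(V0 ⊕ V1, aV, bV)`.  `r00, r01` are the even operators `ρ₀`, and `r10, r11`
the odd operators `ρ₁` (on the even resp. odd part of `V`). -/
structure HLARep (k : Type*) [Field k] [CharZero k]
    {A0 A1 : Type*} [AddCommGroup A0] [Module k A0] [AddCommGroup A1] [Module k A1]
    (L : HLA k A0 A1)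
    (V0 V1 : Type*) [AddCommGroup V0] [Module k V0] [AddCommGroup V1] [Module k V1]
    (aV : V0 →ₗ[k] V0) (bV : V1 →ₗ[k] V1) where
  r00 : A0 →ₗ[k] V0 →ₗ[k] V0
  r01 : A0 →ₗ[k] V1 →ₗ[k] V1
  r10 : A1 →ₗ[k] V0 →ₗ[k] V1
  r11 : A1 →ₗ[k] V1 →ₗ[k] V0
  c01 : ∀ x u, aV (r00 x u) = r00 (L.a x) (aV u)
  c02 : ∀ x w, bV (r01 x w) = r01 (L.a x) (bV w)
  c03 : ∀ y u, bV (r10 y u) = r10 (L.b y) (aV u)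
  c04 : ∀ y w, aV (r11 y w) = r11 (L.b y) (bV w)
  ra : ∀ x1 x2 u, r00 (L.a x1) (r00 x2 u) = r00 (L.mul x1 x2) (aV u)
  rb : ∀ x1 x2 w, r01 (L.a x1) (r01 x2 w) = (2⁻¹ : k) • r01 (L.mul x1 x2) (bV w)
  rc : ∀ x1 y1 u, r01 (L.a x1) (r10 y1 u) = (2⁻¹ : k) • r10 (L.b y1) (r00 x1 u)
  rd : ∀ x1 y1 u, r10 (L.act x1 y1) (aV u) = (2⁻¹ : k) • r10 (L.b y1) (r00 x1 u)
  re : ∀ x1 y1 w, r00 (L.a x1) (r11 y1 w)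
      = r11 (L.act x1 y1) (bV w) + r11 (L.b y1) (r01 x1 w)
  rf : ∀ y1 y2 u, r00 (L.br y1 y2) (aV u)
      = r11 (L.b y1) (r10 y2 u) - r11 (L.b y2) (r10 y1 u)
  rg : ∀ y1 y2 w, r01 (L.br y1 y2) (bV w)
      = - r10 (L.b y1) (r11 y2 w) + r10 (L.b y2) (r11 y1 w)


/-- If `(ρ₀, ρ₁)` is a representation of a Hom-Lie antialgebra `(𝔞, α, β)` on a
Hom-super vector space `(V, α_V, β_V)`, then the direct sum `𝔞 ⊕ V` with the
semidirect-sum structure maps and operations is a Hom-Lie antialgebra. -/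
theorem semidirectSum_of_rep_is_HomLieAntialgebra
    {k : Type*} [Field k] [CharZero k]
    {A0 A1 : Type*} [AddCommGroup A0] [Module k A0] [AddCommGroup A1] [Module k A1]
    {V0 V1 : Type*} [AddCommGroup V0] [Module k V0] [AddCommGroup V1] [Module k V1]
    (L : HLA k A0 A1) (aV : V0 →ₗ[k] V0) (bV : V1 →ₗ[k] V1)
    (R : HLARep k L V0 V1 aV bV) :
    ∃ S : HLA k (A0 × V0) (A1 × V1),
      (∀ p : A0 × V0, S.a p = (L.a p.1, aV p.2)) ∧
      (∀ q : A1 × V1, S.b q = (L.b q.1, bV q.2)) ∧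
      (∀ p1 p2 : A0 × V0,
        S.mul p1 p2 = (L.mul p1.1 p2.1, R.r00 p1.1 p2.2 + R.r00 p2.1 p1.2)) ∧
      (∀ (p : A0 × V0) (q : A1 × V1),
        S.act p q = (L.act p.1 q.1, R.r01 p.1 q.2 + R.r10 q.1 p.2)) ∧
      (∀ q1 q2 : A1 × V1,
        S.br q1 q2 = (L.br q1.1 q2.1, R.r11 q1.1 q2.2 - R.r11 q2.1 q1.2)) := by
  classical
  refine ⟨{
    mul := LinearMap.mk₂ k
      (fun p1 p2 => (L.mul p1.1 p2.1, R.r00 p1.1 p2.2 + R.r00 p2.1 p1.2))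
      (by intro p q r; simp [Prod.ext_iff]; abel)
      (by intro c p q; simp [Prod.ext_iff, smul_add])
      (by intro p q r; simp [Prod.ext_iff]; abel)
      (by intro c p q; simp [Prod.ext_iff, smul_add])
    act := LinearMap.mk₂ k
      (fun p q => (L.act p.1 q.1, R.r01 p.1 q.2 + R.r10 q.1 p.2))
      (by intro p q r; simp [Prod.ext_iff]; abel)
      (by intro c p q; simp [Prod.ext_iff, smul_add])
      (by intro p q r; simp [Prod.ext_iff]; abel)
      (by intro c p q; simp [Prod.ext_iff, smul_add])
    br := LinearMap.mk₂ k
      (fun q1 q2 => (L.br q1.1 q2.1, R.r11 q1.1 q2.2 - R.r11 q2.1 q1.2))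
      (by intro p q r; simp [Prod.ext_iff]; abel)
      (by intro c p q; simp [Prod.ext_iff, smul_sub])
      (by intro p q r; simp [Prod.ext_iff]; abel)
      (by intro c p q; simp [Prod.ext_iff, smul_sub])
    a := (L.a).prodMap aV
    b := (L.b).prodMap bV
    mul_comm' := by
      intro x y
      simp [Prod.ext_iff, L.mul_comm' x.1 y.1]; abel
    br_skew := by
      intro y z
      simp [Prod.ext_iff, L.br_skew y.1 z.1]
    ax1 := by
      intro p1 p2 p3
      simp only [LinearMap.mk₂_apply, LinearMap.prodMap_apply, Prod.ext_iff]
      constructor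
      · exact L.ax1 _ _ _
      · simp only [map_add, R.ra, L.mul_comm' p3.1 p1.1, L.mul_comm' p3.1 p2.1]
        abel
    ax2 := by
      intro p1 p2 q1
      simp only [LinearMap.mk₂_apply, LinearMap.prodMap_apply, Prod.ext_iff,
        Prod.smul_mk, Prod.mk.injEq]
      constructor
      · exact L.ax2 _ _ _
      · simp only [map_add, R.rb, R.rc, R.rd, smul_add]
        abel
    ax3 := by
      intro p1 q1 q2
      simp only [LinearMap.mk₂_apply, LinearMap.prodMap_apply, Prod.ext_iff,
        Prod.mk_add_mk, Prod.mk.injEq]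
      constructor
      · exact L.ax3 _ _ _
      · simp only [map_add, map_sub, R.re, R.rf]
        abel
    ax4 := by
      intro q1 q2 q3
      simp only [LinearMap.mk₂_apply, LinearMap.prodMap_apply, Prod.ext_iff,
        Prod.mk_add_mk, Prod.fst_zero, Prod.snd_zero, Prod.mk.injEq]
      constructor
      · exact L.ax4 _ _ _
      · simp only [map_add, map_sub, R.rg]
        abel
    m1 := by
      intro p1 p2
      simp only [LinearMap.mk₂_apply, LinearMap.prodMap_apply, Prod.ext_iff,
        Prod.mk.injEq]
      exact ⟨L.m1 _ _, by simp [R.c01]⟩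
    m2 := by
      intro p q
      simp only [LinearMap.mk₂_apply, LinearMap.prodMap_apply, Prod.ext_iff,
        Prod.mk.injEq]
      exact ⟨L.m2 _ _, by simp [R.c02, R.c03]⟩
    m3 := by
      intro q1 q2
      simp only [LinearMap.mk₂_apply, LinearMap.prodMap_apply, Prod.ext_iff,
        Prod.mk.injEq]
      exact ⟨L.m3 _ _, by simp [R.c04]⟩
  }, ?_, ?_, ?_, ?_, ?_⟩ <;> intros <;> rfl
end

section
/- Conversely, if the direct sum 𝔞 ⊕ V with the operations (x₁,u₁)·(x₂,u₂) = (x₁·x₂, ρ₀(x₁)(u₂) + ρ₀(x₂)(u₁)), (x₁,u₁)·(y₁,w₁) = (x₁·y₁, ρ₀(x₁)(w₁) + ρ₁(y₁)(u₁)), [(y₁,w₁),(y₂,w₂)] = ([y₁,y₂], ρ₁(y₁)(w₂) − ρ₁(y₂)(w₁)) and structure maps (α+α_{V₀}, β+β_{V₁}) is a Hom-Lie antialgebra, then (ρ₀, ρ₁) is a representation of (𝔞, α, β) on (V, α_{V₀}, β_{V₁}). -/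
/-- Conversely, if the direct sum `𝔞 ⊕ V` with the semidirect-sum operations and
structure maps `(α + α_V, β + β_V)` is a Hom-Lie antialgebra, then `(ρ₀, ρ₁)`
(given by `r00, r01, r10, r11`, assumed compatible with `α_V, β_V`) is a
representation of `(𝔞, α, β)` on `(V, α_V, β_V)`. -/
theorem rep_of_semidirectSum_is_HomLieAntialgebra
    {k : Type*} [Field k] [CharZero k]
    {A0 A1 : Type*} [AddCommGroup A0] [Module k A0] [AddCommGroup A1] [Module k A1]
    {V0 V1 : Type*} [AddCommGroup V0] [Module k V0] [AddCommGroup V1] [Module k V1]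
    (L : HLA k A0 A1) (aV : V0 →ₗ[k] V0) (bV : V1 →ₗ[k] V1)
    (r00 : A0 →ₗ[k] V0 →ₗ[k] V0) (r01 : A0 →ₗ[k] V1 →ₗ[k] V1)
    (r10 : A1 →ₗ[k] V0 →ₗ[k] V1) (r11 : A1 →ₗ[k] V1 →ₗ[k] V0)
    (c01 : ∀ x u, aV (r00 x u) = r00 (L.a x) (aV u))
    (c02 : ∀ x w, bV (r01 x w) = r01 (L.a x) (bV w))
    (c03 : ∀ y u, bV (r10 y u) = r10 (L.b y) (aV u))
    (c04 : ∀ y w, aV (r11 y w) = r11 (L.b y) (bV w))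
    (S : HLA k (A0 × V0) (A1 × V1))
    (hSa : ∀ p : A0 × V0, S.a p = (L.a p.1, aV p.2))
    (hSb : ∀ q : A1 × V1, S.b q = (L.b q.1, bV q.2))
    (hSmul : ∀ p1 p2 : A0 × V0,
      S.mul p1 p2 = (L.mul p1.1 p2.1, r00 p1.1 p2.2 + r00 p2.1 p1.2))
    (hSact : ∀ (p : A0 × V0) (q : A1 × V1),
      S.act p q = (L.act p.1 q.1, r01 p.1 q.2 + r10 q.1 p.2))
    (hSbr : ∀ q1 q2 : A1 × V1,
      S.br q1 q2 = (L.br q1.1 q2.1, r11 q1.1 q2.2 - r11 q2.1 q1.2)) :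
    ∃ R : HLARep k L V0 V1 aV bV,
      R.r00 = r00 ∧ R.r01 = r01 ∧ R.r10 = r10 ∧ R.r11 = r11 := by

  refine ⟨{ r00 := r00, r01 := r01, r10 := r10, r11 := r11,
            c01 := c01, c02 := c02, c03 := c03, c04 := c04,
            ra := ?_, rb := ?_, rc := ?_, rd := ?_, re := ?_, rf := ?_, rg := ?_ },
          rfl, rfl, rfl, rfl⟩
  · intro x1 x2 u
    have h := congrArg Prod.snd (S.ax1 (x1, 0) (x2, 0) ((0 : A0), u))
    simpa [hSmul, hSa] using h
  · intro x1 x2 w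
    have h := congrArg Prod.snd (S.ax2 (x1, 0) (x2, 0) ((0 : A1), w))
    simpa [hSact, hSmul, hSa, hSb] using h
  · intro x1 y1 u
    have h := congrArg Prod.snd (S.ax2 (x1, 0) ((0 : A0), u) (y1, 0))
    simpa [hSact, hSmul, hSa, hSb] using h
  · intro x1 y1 u
    have h := congrArg Prod.snd (S.ax2 ((0 : A0), u) (x1, 0) (y1, 0))
    simpa [hSact, hSmul, hSa, hSb] using h
  · intro x1 y1 w
    have h := congrArg Prod.snd (S.ax3 (x1, 0) (y1, 0) ((0 : A1), w))
    simpa [hSmul, hSbr, hSact, hSa, hSb] using h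
  · intro y1 y2 u
    have h := congrArg Prod.snd (S.ax3 ((0 : A0), u) (y1, 0) (y2, 0))
    simp [hSmul, hSbr, hSact, hSa, hSb] at h
    linear_combination (norm := abel) h
  · intro y1 y2 w
    have h := congrArg Prod.snd (S.ax4 ((0 : A1), w) (y1, 0) (y2, 0))
    simp [hSact, hSbr, hSb] at h
    linear_combination (norm := abel) h
end

section
/- Let (V, α_{V₀}, β_{V₁}) and (𝔞, α, β) be Hom-Lie antialgebras with an action ρ of 𝔞 on V. Then the direct sum 𝔞 ⊕ V equipped with structure maps (α+α_{V₀}, β+β_{V₁}) and operations (x₁,u₁)·(x₂,u₂) = (x₁·x₂, ρ₀(x₁)(u₂) + ρ₀(x₂)(u₁) + u₁·u₂), (x₁,u₁)·(y₁,w₁) = (x₁·y₁, ρ₀(x₁)(w₁) + ρ₁(y₁)(u₁) + u₁·w₁), [(y₁,w₁),(y₂,w₂)] = ([y₁,y₂], ρ₁(y₁)(w₂) − ρ₁(y₂)(w₁) + [w₁,w₂]) is a Hom-Lie antialgebra (the semidirect product 𝔞 ⋉ V). -/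
/-- An action of the Hom-Lie antialgebra `L` on the Hom-Lie antialgebra `LV`:
a representation on the underlying space together with the compatibility
conditions with the algebra structure of `LV`. -/
structure HLAAction (k : Type*) [Field k] [CharZero k]
    {A0 A1 : Type*} [AddCommGroup A0] [Module k A0] [AddCommGroup A1] [Module k A1]
    (L : HLA k A0 A1)
    {V0 V1 : Type*} [AddCommGroup V0] [Module k V0] [AddCommGroup V1] [Module k V1]
    (LV : HLA k V0 V1)
    extends HLARep k L V0 V1 LV.a LV.b where
  a01 : ∀ x u1 u2, r00 (L.a x) (LV.mul u1 u2) = LV.mul (r00 x u1) (LV.a u2)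
  a021 : ∀ x u w, r01 (L.a x) (LV.act u w) = (2⁻¹ : k) • LV.act (r00 x u) (LV.b w)
  a022 : ∀ y u1 u2, LV.act (LV.a u1) (r10 y u2) = (2⁻¹ : k) • r10 (L.b y) (LV.mul u1 u2)
  a023 : ∀ x u w, LV.act (LV.a u) (r01 x w) = (2⁻¹ : k) • LV.act (r00 x u) (LV.b w)
  a031 : ∀ x w1 w2, r00 (L.a x) (LV.br w1 w2)
      = LV.br (r01 x w1) (LV.b w2) + LV.br (LV.b w1) (r01 x w2)
  a032 : ∀ y u w, r11 (L.b y) (LV.act u w)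
      = LV.mul (LV.a u) (r11 y w) - LV.br (r10 y u) (LV.b w)
  a04 : ∀ y w1 w2, r10 (L.b y) (LV.br w1 w2)
      = LV.act (r11 y w2) (LV.b w1) - LV.act (r11 y w1) (LV.b w2)



section SemidirectAux

variable {k : Type*} [Field k] [CharZero k]
    {A0 A1 : Type*} [AddCommGroup A0] [Module k A0] [AddCommGroup A1] [Module k A1]
    {V0 V1 : Type*} [AddCommGroup V0] [Module k V0] [AddCommGroup V1] [Module k V1]
    (L : HLA k A0 A1) (LV : HLA k V0 V1) (A : HLAAction k L LV)

/-- The product on the even part of the semidirect product. -/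
def sdMul : (A0 × V0) →ₗ[k] (A0 × V0) →ₗ[k] (A0 × V0) :=
  LinearMap.mk₂ k
    (fun p1 p2 => (L.mul p1.1 p2.1,
      A.r00 p1.1 p2.2 + A.r00 p2.1 p1.2 + LV.mul p1.2 p2.2))
    (by intro p q r; simp [Prod.ext_iff]; abel)
    (by intro c p q; simp [Prod.ext_iff, smul_add])
    (by intro p q r; simp [Prod.ext_iff]; abel)
    (by intro p c q; simp [Prod.ext_iff, smul_add])

/-- The action of the even part on the odd part of the semidirect product. -/
def sdAct : (A0 × V0) →ₗ[k] (A1 × V1) →ₗ[k] (A1 × V1) :=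
  LinearMap.mk₂ k
    (fun p q => (L.act p.1 q.1,
      A.r01 p.1 q.2 + A.r10 q.1 p.2 + LV.act p.2 q.2))
    (by intro p q r; simp [Prod.ext_iff]; abel)
    (by intro c p q; simp [Prod.ext_iff, smul_add])
    (by intro p q r; simp [Prod.ext_iff]; abel)
    (by intro p c q; simp [Prod.ext_iff, smul_add])

/-- The bracket on the odd part of the semidirect product. -/
def sdBr : (A1 × V1) →ₗ[k] (A1 × V1) →ₗ[k] (A0 × V0) :=
  LinearMap.mk₂ k
    (fun q1 q2 => (L.br q1.1 q2.1,
      A.r11 q1.1 q2.2 - A.r11 q2.1 q1.2 + LV.br q1.2 q2.2))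
    (by intro p q r; simp [Prod.ext_iff]; abel)
    (by intro c p q; simp [Prod.ext_iff, smul_sub, smul_add])
    (by intro p q r; simp [Prod.ext_iff]; abel)
    (by intro p c q; simp [Prod.ext_iff, smul_sub, smul_add])


lemma sd_mul_comm : ∀ x y, sdMul L LV A x y = sdMul L LV A y x := by
  intro x y
  simp only [sdMul, LinearMap.mk₂_apply, Prod.mk.injEq]
  exact ⟨L.mul_comm' _ _, by rw [LV.mul_comm' x.2 y.2]; abel⟩

lemma sd_br_skew : ∀ y z, sdBr L LV A y z = - sdBr L LV A z y := by
  intro y z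
  simp only [sdBr, LinearMap.mk₂_apply, Prod.neg_mk, Prod.mk.injEq]
  exact ⟨L.br_skew _ _, by rw [LV.br_skew y.2 z.2]; abel⟩

lemma sd_ax1 : ∀ x1 x2 x3, sdMul L LV A ((L.a).prodMap LV.a x1) (sdMul L LV A x2 x3)
    = sdMul L LV A (sdMul L LV A x1 x2) ((L.a).prodMap LV.a x3) := by
  rintro ⟨x1, u1⟩ ⟨x2, u2⟩ ⟨x3, u3⟩
  simp only [sdMul, LinearMap.mk₂_apply, LinearMap.prodMap_apply, map_add,
    LinearMap.add_apply, Prod.mk.injEq]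
  refine ⟨L.ax1 _ _ _, ?_⟩
  have h5 : LV.mul (LV.a u1) (A.r00 x2 u3) = LV.mul (A.r00 x2 u1) (LV.a u3) := by
    rw [LV.mul_comm', ← A.a01, LV.mul_comm' u3 u1, A.a01]
  have h6 : LV.mul (LV.a u1) (A.r00 x3 u2) = LV.mul (A.r00 x3 u1) (LV.a u2) := by
    rw [LV.mul_comm', ← A.a01, LV.mul_comm' u2 u1, A.a01]
  rw [A.ra x1 x2 u3, A.ra x1 x3 u2, A.a01 x1 u2 u3, h5, h6, LV.ax1 u1 u2 u3,
    A.ra x3 x1 u2, A.ra x3 x2 u1, A.a01 x3 u1 u2, L.mul_comm' x3 x1, L.mul_comm' x3 x2]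
  abel

lemma sd_ax2 : ∀ x1 x2 y1, sdAct L LV A ((L.a).prodMap LV.a x1) (sdAct L LV A x2 y1)
    = (2⁻¹ : k) • sdAct L LV A (sdMul L LV A x1 x2) ((L.b).prodMap LV.b y1) := by
  rintro ⟨x1, u1⟩ ⟨x2, u2⟩ ⟨y, w⟩
  simp only [sdAct, sdMul, LinearMap.mk₂_apply, LinearMap.prodMap_apply, map_add,
    LinearMap.add_apply, Prod.smul_mk, smul_add, Prod.mk.injEq]
  refine ⟨L.ax2 _ _ _, ?_⟩
  rw [A.rb x1 x2 w, A.rc x1 y u2, A.a021 x1 u2 w, A.rd x2 y u1, A.a023 x2 u1 w,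
    A.a022 y u1 u2, LV.ax2 u1 u2 w]
  module

lemma sd_ax3 : ∀ x1 y1 y2, sdMul L LV A ((L.a).prodMap LV.a x1) (sdBr L LV A y1 y2)
    = sdBr L LV A (sdAct L LV A x1 y1) ((L.b).prodMap LV.b y2)
      + sdBr L LV A ((L.b).prodMap LV.b y1) (sdAct L LV A x1 y2) := by
  rintro ⟨x, u⟩ ⟨y1, w1⟩ ⟨y2, w2⟩
  simp only [sdMul, sdAct, sdBr, LinearMap.mk₂_apply, LinearMap.prodMap_apply, map_add,
    map_sub, LinearMap.add_apply, LinearMap.sub_apply, Prod.mk.injEq, Prod.mk_add_mk]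
  refine ⟨L.ax3 _ _ _, ?_⟩
  have h1 : LV.mul (LV.a u) (A.r11 y1 w2)
      = A.r11 (L.b y1) (LV.act u w2) + LV.br (A.r10 y1 u) (LV.b w2) := by
    rw [A.a032]; abel
  have h2 : LV.mul (LV.a u) (A.r11 y2 w1)
      = A.r11 (L.b y2) (LV.act u w1) + LV.br (A.r10 y2 u) (LV.b w1) := by
    rw [A.a032]; abel
  have h3 : LV.br (LV.b w1) (A.r10 y2 u) = - LV.br (A.r10 y2 u) (LV.b w1) :=
    LV.br_skew _ _
  rw [A.re x y1 w2, A.re x y2 w1, A.a031, A.rf, h1, h2, LV.ax3 u w1 w2, h3]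
  abel

lemma sd_ax4 : ∀ y1 y2 y3,
    sdAct L LV A (sdBr L LV A y2 y3) ((L.b).prodMap LV.b y1)
    + sdAct L LV A (sdBr L LV A y3 y1) ((L.b).prodMap LV.b y2)
    + sdAct L LV A (sdBr L LV A y1 y2) ((L.b).prodMap LV.b y3) = 0 := by
  rintro ⟨y1, w1⟩ ⟨y2, w2⟩ ⟨y3, w3⟩
  simp only [sdAct, sdBr, LinearMap.mk₂_apply, LinearMap.prodMap_apply, map_add,
    map_sub, LinearMap.add_apply, LinearMap.sub_apply, Prod.mk_add_mk, Prod.mk_eq_zero]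
  refine ⟨L.ax4 _ _ _, ?_⟩
  have hV := LV.ax4 w1 w2 w3
  rw [A.rg y2 y3 w1, A.rg y3 y1 w2, A.rg y1 y2 w3, A.a04 y1 w2 w3, A.a04 y2 w3 w1,
    A.a04 y3 w1 w2, ← hV]
  abel

lemma sd_m1 : ∀ x1 x2, (L.a).prodMap LV.a (sdMul L LV A x1 x2)
    = sdMul L LV A ((L.a).prodMap LV.a x1) ((L.a).prodMap LV.a x2) := by
  intro x1 x2
  simp [sdMul, LinearMap.mk₂_apply, LinearMap.prodMap_apply, map_add, A.c01, LV.m1, L.m1]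

lemma sd_m2 : ∀ x y, (L.b).prodMap LV.b (sdAct L LV A x y)
    = sdAct L LV A ((L.a).prodMap LV.a x) ((L.b).prodMap LV.b y) := by
  intro x y
  simp [sdAct, LinearMap.mk₂_apply, LinearMap.prodMap_apply, map_add, A.c02, A.c03, LV.m2, L.m2]

lemma sd_m3 : ∀ y1 y2, (L.a).prodMap LV.a (sdBr L LV A y1 y2)
    = sdBr L LV A ((L.b).prodMap LV.b y1) ((L.b).prodMap LV.b y2) := by
  intro y1 y2
  simp [sdBr, LinearMap.mk₂_apply, LinearMap.prodMap_apply, map_add, map_sub, A.c04, LV.m3, L.m3]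

end SemidirectAux

/-- If `(𝔞, α, β)` acts on the Hom-Lie antialgebra `(V, α_V, β_V)`, then the
semidirect product `𝔞 ⋉ V`, with componentwise structure maps and the twisted
operations, is a Hom-Lie antialgebra. -/
theorem semidirectProduct_is_HomLieAntialgebra
    {k : Type*} [Field k] [CharZero k]
    {A0 A1 : Type*} [AddCommGroup A0] [Module k A0] [AddCommGroup A1] [Module k A1]
    {V0 V1 : Type*} [AddCommGroup V0] [Module k V0] [AddCommGroup V1] [Module k V1]
    (L : HLA k A0 A1) (LV : HLA k V0 V1) (A : HLAAction k L LV) :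
    ∃ S : HLA k (A0 × V0) (A1 × V1),
      (∀ p : A0 × V0, S.a p = (L.a p.1, LV.a p.2)) ∧
      (∀ q : A1 × V1, S.b q = (L.b q.1, LV.b q.2)) ∧
      (∀ p1 p2 : A0 × V0,
        S.mul p1 p2 = (L.mul p1.1 p2.1,
          A.r00 p1.1 p2.2 + A.r00 p2.1 p1.2 + LV.mul p1.2 p2.2)) ∧
      (∀ (p : A0 × V0) (q : A1 × V1),
        S.act p q = (L.act p.1 q.1,
          A.r01 p.1 q.2 + A.r10 q.1 p.2 + LV.act p.2 q.2)) ∧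
      (∀ q1 q2 : A1 × V1,
        S.br q1 q2 = (L.br q1.1 q2.1,
          A.r11 q1.1 q2.2 - A.r11 q2.1 q1.2 + LV.br q1.2 q2.2)) := by
  exact ⟨{ mul := sdMul L LV A
           act := sdAct L LV A
           br := sdBr L LV A
           a := LinearMap.prodMap L.a LV.a
           b := LinearMap.prodMap L.b LV.b
           mul_comm' := sd_mul_comm L LV A
           br_skew := sd_br_skew L LV A
           ax1 := sd_ax1 L LV A
           ax2 := sd_ax2 L LV A
           ax3 := sd_ax3 L LV A
           ax4 := sd_ax4 L LV A
           m1 := sd_m1 L LV A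
           m2 := sd_m2 L LV A
           m3 := sd_m3 L LV A },
    fun p => rfl, fun q => rfl, fun p1 p2 => rfl, fun p q => rfl, fun q1 q2 => rfl⟩
end

section
/- Let ∂: (V, α_{V₀}, β_{V₁}) → (𝔞, α, β) be a crossed module of Hom-Lie antialgebras, and form the semidirect product 𝔞 ⋉ V. Then the map t: 𝔞 ⋉ V → 𝔞 defined by t₀(x,u) = ∂₀(u) + x and t₁(y,w) = ∂₁(w) + y is a homomorphism of Hom-Lie antialgebras. -/
/-- A crossed module of Hom-Lie antialgebras: a homomorphism `∂ = (d0, d1) : V → 𝔞`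
together with an action of `𝔞` on `V`, satisfying equivariance and the
Peiffer identities. -/
structure HLACrossedModule (k : Type*) [Field k] [CharZero k]
    {A0 A1 : Type*} [AddCommGroup A0] [Module k A0] [AddCommGroup A1] [Module k A1]
    (L : HLA k A0 A1)
    {V0 V1 : Type*} [AddCommGroup V0] [Module k V0] [AddCommGroup V1] [Module k V1]
    (LV : HLA k V0 V1)
    extends HLAAction k L LV where
  d0 : V0 →ₗ[k] A0
  d1 : V1 →ₗ[k] A1
  hd1 : ∀ u, d0 (LV.a u) = L.a (d0 u)
  hd2 : ∀ w, d1 (LV.b w) = L.b (d1 w)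
  hd3 : ∀ u1 u2, d0 (LV.mul u1 u2) = L.mul (d0 u1) (d0 u2)
  hd4 : ∀ u w, d1 (LV.act u w) = L.act (d0 u) (d1 w)
  hd5 : ∀ w1 w2, d0 (LV.br w1 w2) = L.br (d1 w1) (d1 w2)
  cm1 : ∀ x u, d0 (r00 x u) = L.mul x (d0 u)
  cm2 : ∀ x w, d1 (r01 x w) = L.act x (d1 w)
  cm3 : ∀ y u, d1 (r10 y u) = L.act (d0 u) y
  cm4 : ∀ y w, d0 (r11 y w) = L.br y (d1 w)
  p1 : ∀ u1 u2, r00 (d0 u1) u2 = LV.mul u1 u2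
  p2 : ∀ w1 w2, r11 (d1 w1) w2 = LV.br w1 w2
  p3 : ∀ u w, r01 (d0 u) w = LV.act u w
  p3' : ∀ u w, r10 (d1 w) u = LV.act u w

/-- For a crossed module `∂ : (V, α_V, β_V) → (𝔞, α, β)` of Hom-Lie antialgebras,
the map `t : 𝔞 ⋉ V → 𝔞`, `t₀(x,u) = ∂₀(u) + x`, `t₁(y,w) = ∂₁(w) + y`, is a
homomorphism of Hom-Lie antialgebras from the semidirect product to `𝔞`:
it intertwines the structure maps and preserves all three products. -/
theorem t_is_homomorphism_of_semidirectProduct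
    {k : Type*} [Field k] [CharZero k]
    {A0 A1 : Type*} [AddCommGroup A0] [Module k A0] [AddCommGroup A1] [Module k A1]
    {V0 V1 : Type*} [AddCommGroup V0] [Module k V0] [AddCommGroup V1] [Module k V1]
    (L : HLA k A0 A1) (LV : HLA k V0 V1) (C : HLACrossedModule k L LV) :
    -- t intertwines the structure maps
    (∀ p : A0 × V0, C.d0 (LV.a p.2) + L.a p.1 = L.a (C.d0 p.2 + p.1)) ∧
    (∀ q : A1 × V1, C.d1 (LV.b q.2) + L.b q.1 = L.b (C.d1 q.2 + q.1)) ∧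
    -- t preserves the even product of 𝔞 ⋉ V
    (∀ p1 p2 : A0 × V0,
      C.d0 (C.r00 p1.1 p2.2 + C.r00 p2.1 p1.2 + LV.mul p1.2 p2.2) + L.mul p1.1 p2.1
        = L.mul (C.d0 p1.2 + p1.1) (C.d0 p2.2 + p2.1)) ∧
    -- t preserves the mixed product of 𝔞 ⋉ V
    (∀ (p : A0 × V0) (q : A1 × V1),
      C.d1 (C.r01 p.1 q.2 + C.r10 q.1 p.2 + LV.act p.2 q.2) + L.act p.1 q.1
        = L.act (C.d0 p.2 + p.1) (C.d1 q.2 + q.1)) ∧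
    -- t preserves the bracket of 𝔞 ⋉ V
    (∀ q1 q2 : A1 × V1,
      C.d0 (C.r11 q1.1 q2.2 - C.r11 q2.1 q1.2 + LV.br q1.2 q2.2) + L.br q1.1 q2.1
        = L.br (C.d1 q1.2 + q1.1) (C.d1 q2.2 + q2.1)) := by
  refine ⟨?_, ?_, ?_, ?_, ?_⟩
  · intro p; simp [C.hd1, map_add]
  · intro q; simp [C.hd2, map_add]
  · intro p1 p2
    simp only [map_add, C.cm1, C.hd3, LinearMap.add_apply, LinearMap.map_add]
    rw [L.mul_comm' p2.1 (C.d0 p1.2)]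
    abel
  · intro p q
    simp only [map_add, C.cm2, C.cm3, C.hd4, LinearMap.add_apply, LinearMap.map_add]
    abel
  · intro q1 q2
    simp only [map_add, map_sub, C.cm4, C.hd5, LinearMap.add_apply, LinearMap.map_add]
    rw [L.br_skew q2.1 (C.d1 q1.2)]
    abel
end

section
/- Let ∂: V → 𝔞 be a crossed module of Hom-Lie antialgebras and let s, t: 𝔞 ⋉ V → 𝔞 be defined by s₀(x,u) = x, s₁(y,w) = y, t₀(x,u) = ∂₀(u) + x, t₁(y,w) = ∂₁(w) + y. Then Ker s₀ · Ker t₀ = 0, Ker s₀ · Ker t₁ = 0, Ker t₀ · Ker s₁ = 0, and [Ker s₁, Ker t₁] = 0; that is, for all u₁, u₂ ∈ V₀ and w₁, w₂ ∈ V₁ one has (0,u₁)·(−∂₀(u₂), u₂) = 0, (0,u₁)·(−∂₁(w₁), w₁) = 0, (−∂₀(u₁), u₁)·(0,w₁) = 0, and [(0,w₁),(−∂₁(w₂), w₂)] = 0 in 𝔞 ⋉ V. -/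
/-- For a crossed module `∂ : V → 𝔞` of Hom-Lie antialgebras, with
`s₀(x,u) = x`, `s₁(y,w) = y`, `t₀(x,u) = ∂₀(u) + x`, `t₁(y,w) = ∂₁(w) + y` on the
semidirect product `𝔞 ⋉ V`, the kernels annihilate each other:
`Ker s₀ · Ker t₀ = 0`, `Ker s₀ · Ker t₁ = 0`, `Ker t₀ · Ker s₁ = 0`,
`[Ker s₁, Ker t₁] = 0`, i.e. the displayed products of pairs vanish in `𝔞 ⋉ V`
(products of pairs computed by the semidirect product formulas). -/
theorem kernels_annihilate_in_semidirectProduct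
    {k : Type*} [Field k] [CharZero k]
    {A0 A1 : Type*} [AddCommGroup A0] [Module k A0] [AddCommGroup A1] [Module k A1]
    {V0 V1 : Type*} [AddCommGroup V0] [Module k V0] [AddCommGroup V1] [Module k V1]
    (L : HLA k A0 A1) (LV : HLA k V0 V1) (C : HLACrossedModule k L LV) :
    -- (0,u₁)·(−∂₀(u₂), u₂) = 0
    (∀ u1 u2 : V0,
      ((L.mul 0 (-(C.d0 u2)), C.r00 (0 : A0) u2 + C.r00 (-(C.d0 u2)) u1 + LV.mul u1 u2)
        : A0 × V0) = 0) ∧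
    -- (0,u₁)·(−∂₁(w₁), w₁) = 0
    (∀ (u1 : V0) (w1 : V1),
      ((L.act 0 (-(C.d1 w1)), C.r01 (0 : A0) w1 + C.r10 (-(C.d1 w1)) u1 + LV.act u1 w1)
        : A1 × V1) = 0) ∧
    -- (−∂₀(u₁), u₁)·(0, w₁) = 0
    (∀ (u1 : V0) (w1 : V1),
      ((L.act (-(C.d0 u1)) 0, C.r01 (-(C.d0 u1)) w1 + C.r10 (0 : A1) u1 + LV.act u1 w1)
        : A1 × V1) = 0) ∧
    -- [(0,w₁), (−∂₁(w₂), w₂)] = 0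
    (∀ w1 w2 : V1,
      ((L.br 0 (-(C.d1 w2)), C.r11 (0 : A1) w2 - C.r11 (-(C.d1 w2)) w1 + LV.br w1 w2)
        : A0 × V0) = 0) := by
  refine ⟨fun u1 u2 => ?_, fun u1 w1 => ?_, fun u1 w1 => ?_, fun w1 w2 => ?_⟩
  · simp [Prod.ext_iff, map_neg, C.p1, LV.mul_comm' u2 u1]
  · simp [Prod.ext_iff, map_neg, C.p3']
  · simp [Prod.ext_iff, map_neg, C.p3]
  · simp [Prod.ext_iff, map_neg, C.p2, LV.br_skew w2 w1]
end

section
/- Let (M, N, s, t) be a Cat¹-Hom-Lie antialgebra. Then Ker s = Ker s₀ ⊕ Ker s₁ is an ideal of M; in particular, for x ∈ N₀, y ∈ N₁, p ∈ Ker s₀, q ∈ Ker s₁, one has x·p ∈ Ker s₀, [y,q] ∈ Ker s₀, x·q ∈ Ker s₁, y·p ∈ Ker s₁, so that N acts on Ker s via ρ₀(x)(p) = x·p, ρ₁(y)(q) = [y,q], ρ₀(x)(q) = x·q, ρ₁(y)(p) = y·p, and this defines a representation of N on Ker s. -/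
/-- A `Cat¹`-Hom-Lie antialgebra: a Hom-Lie antialgebra `M` together with a
Hom-Lie subantialgebra `N` (given by an injective homomorphism `i`) and
structural homomorphisms `s, t : M → N` restricting to the identity on `N`,
whose kernels annihilate each other. -/
structure Cat1HLA (k : Type*) [Field k] [CharZero k]
    {M0 M1 : Type*} [AddCommGroup M0] [Module k M0] [AddCommGroup M1] [Module k M1]
    (M : HLA k M0 M1)
    {N0 N1 : Type*} [AddCommGroup N0] [Module k N0] [AddCommGroup N1] [Module k N1]
    (N : HLA k N0 N1) where
  i0 : N0 →ₗ[k] M0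
  i1 : N1 →ₗ[k] M1
  i0_inj : Function.Injective i0
  i1_inj : Function.Injective i1
  hi_a : ∀ x, i0 (N.a x) = M.a (i0 x)
  hi_b : ∀ y, i1 (N.b y) = M.b (i1 y)
  hi_mul : ∀ x1 x2, i0 (N.mul x1 x2) = M.mul (i0 x1) (i0 x2)
  hi_act : ∀ x y, i1 (N.act x y) = M.act (i0 x) (i1 y)
  hi_br : ∀ y1 y2, i0 (N.br y1 y2) = M.br (i1 y1) (i1 y2)
  s0 : M0 →ₗ[k] N0
  s1 : M1 →ₗ[k] N1
  t0 : M0 →ₗ[k] N0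
  t1 : M1 →ₗ[k] N1
  hs_a : ∀ x, s0 (M.a x) = N.a (s0 x)
  hs_b : ∀ y, s1 (M.b y) = N.b (s1 y)
  hs_mul : ∀ x1 x2, s0 (M.mul x1 x2) = N.mul (s0 x1) (s0 x2)
  hs_act : ∀ x y, s1 (M.act x y) = N.act (s0 x) (s1 y)
  hs_br : ∀ y1 y2, s0 (M.br y1 y2) = N.br (s1 y1) (s1 y2)
  ht_a : ∀ x, t0 (M.a x) = N.a (t0 x)
  ht_b : ∀ y, t1 (M.b y) = N.b (t1 y)
  ht_mul : ∀ x1 x2, t0 (M.mul x1 x2) = N.mul (t0 x1) (t0 x2)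
  ht_act : ∀ x y, t1 (M.act x y) = N.act (t0 x) (t1 y)
  ht_br : ∀ y1 y2, t0 (M.br y1 y2) = N.br (t1 y1) (t1 y2)
  hs_id0 : ∀ x, s0 (i0 x) = x
  hs_id1 : ∀ y, s1 (i1 y) = y
  ht_id0 : ∀ x, t0 (i0 x) = x
  ht_id1 : ∀ y, t1 (i1 y) = y
  ker1 : ∀ p p', s0 p = 0 → t0 p' = 0 → M.mul p p' = 0
  ker2 : ∀ p q, s0 p = 0 → t1 q = 0 → M.act p q = 0
  ker3 : ∀ p q, t0 p = 0 → s1 q = 0 → M.act p q = 0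
  ker4 : ∀ q q', s1 q = 0 → t1 q' = 0 → M.br q q' = 0

/-- In a `Cat¹`-Hom-Lie antialgebra `(M, N, s, t)`, the kernel of `s` is an
ideal of `M`, and `N` acts on `Ker s` by multiplication in `M`
(`ρ₀(x)(p) = x·p`, `ρ₁(y)(q) = [y,q]`, `ρ₀(x)(q) = x·q`, `ρ₁(y)(p) = y·p`),
and this defines a representation of `N` on `Ker s` (with structure maps the
restrictions of `α_M`, `β_M`): all the representation axioms hold. -/
theorem kerS_ideal_and_representation
    {k : Type*} [Field k] [CharZero k]
    {M0 M1 : Type*} [AddCommGroup M0] [Module k M0] [AddCommGroup M1] [Module k M1]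
    {N0 N1 : Type*} [AddCommGroup N0] [Module k N0] [AddCommGroup N1] [Module k N1]
    (M : HLA k M0 M1) (N : HLA k N0 N1) (C : Cat1HLA k M N) :
    -- Ker s is an ideal of M, invariant under the structure maps
    (∀ (x : M0) (p : M0), C.s0 p = 0 → C.s0 (M.mul x p) = 0) ∧
    (∀ (y : M1) (p : M0), C.s0 p = 0 → C.s1 (M.act p y) = 0) ∧
    (∀ (x : M0) (q : M1), C.s1 q = 0 → C.s1 (M.act x q) = 0) ∧
    (∀ (y : M1) (q : M1), C.s1 q = 0 → C.s0 (M.br y q) = 0) ∧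
    (∀ p : M0, C.s0 p = 0 → C.s0 (M.a p) = 0) ∧
    (∀ q : M1, C.s1 q = 0 → C.s1 (M.b q) = 0) ∧
    -- the induced maps define a representation of N on Ker s:
    -- compatibility with the structure maps
    (∀ (x : N0) (p : M0), C.s0 p = 0 →
      M.a (M.mul (C.i0 x) p) = M.mul (C.i0 (N.a x)) (M.a p)) ∧
    (∀ (x : N0) (q : M1), C.s1 q = 0 →
      M.b (M.act (C.i0 x) q) = M.act (C.i0 (N.a x)) (M.b q)) ∧
    (∀ (y : N1) (p : M0), C.s0 p = 0 →
      M.b (M.act p (C.i1 y)) = M.act (M.a p) (C.i1 (N.b y))) ∧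
    (∀ (y : N1) (q : M1), C.s1 q = 0 →
      M.a (M.br (C.i1 y) q) = M.br (C.i1 (N.b y)) (M.b q)) ∧
    -- the seven representation axioms
    (∀ (x1 x2 : N0) (p : M0), C.s0 p = 0 →
      M.mul (C.i0 (N.a x1)) (M.mul (C.i0 x2) p) = M.mul (C.i0 (N.mul x1 x2)) (M.a p)) ∧
    (∀ (x1 x2 : N0) (q : M1), C.s1 q = 0 →
      M.act (C.i0 (N.a x1)) (M.act (C.i0 x2) q)
        = (2⁻¹ : k) • M.act (C.i0 (N.mul x1 x2)) (M.b q)) ∧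
    (∀ (x1 : N0) (y1 : N1) (p : M0), C.s0 p = 0 →
      M.act (C.i0 (N.a x1)) (M.act p (C.i1 y1))
        = (2⁻¹ : k) • M.act (M.mul (C.i0 x1) p) (C.i1 (N.b y1))) ∧
    (∀ (x1 : N0) (y1 : N1) (p : M0), C.s0 p = 0 →
      M.act (M.a p) (C.i1 (N.act x1 y1))
        = (2⁻¹ : k) • M.act (M.mul (C.i0 x1) p) (C.i1 (N.b y1))) ∧
    (∀ (x1 : N0) (y1 : N1) (q : M1), C.s1 q = 0 →
      M.mul (C.i0 (N.a x1)) (M.br (C.i1 y1) q)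
        = M.br (C.i1 (N.act x1 y1)) (M.b q) + M.br (C.i1 (N.b y1)) (M.act (C.i0 x1) q)) ∧
    (∀ (y1 y2 : N1) (p : M0), C.s0 p = 0 →
      M.mul (C.i0 (N.br y1 y2)) (M.a p)
        = M.br (C.i1 (N.b y1)) (M.act p (C.i1 y2))
          - M.br (C.i1 (N.b y2)) (M.act p (C.i1 y1))) ∧
    (∀ (y1 y2 : N1) (q : M1), C.s1 q = 0 →
      M.act (C.i0 (N.br y1 y2)) (M.b q)
        = - M.act (M.br (C.i1 y2) q) (C.i1 (N.b y1))
          + M.act (M.br (C.i1 y1) q) (C.i1 (N.b y2))) := by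

  refine ⟨?_, ?_, ?_, ?_, ?_, ?_, ?_, ?_, ?_, ?_, ?_, ?_, ?_, ?_, ?_, ?_, ?_⟩
  · intro x p h; simp [C.hs_mul, h]
  · intro y p h; simp [C.hs_act, h]
  · intro x q h; simp [C.hs_act, h]
  · intro y q h; simp [C.hs_br, h]
  · intro p h; simp [C.hs_a, h]
  · intro q h; simp [C.hs_b, h]
  · intro x p _; rw [C.hi_a, M.m1]
  · intro x q _; rw [C.hi_a, M.m2]
  · intro y p _; rw [C.hi_b, M.m2]
  · intro y q _; rw [C.hi_b, M.m3]
  · intro x1 x2 p _; rw [C.hi_a, C.hi_mul, M.ax1]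
  · intro x1 x2 q _; rw [C.hi_a, C.hi_mul, M.ax2]
  · intro x1 y1 p _; rw [C.hi_a, C.hi_b, M.ax2]
  · intro x1 y1 p _; rw [C.hi_act, M.ax2, M.mul_comm' p, C.hi_b]
  · intro x1 y1 q _; rw [C.hi_a, C.hi_act, C.hi_b, M.ax3]
  · intro y1 y2 p _
    rw [C.hi_br, C.hi_b y1, C.hi_b y2, M.mul_comm', M.ax3,
      M.br_skew (M.act p (C.i1 y1)) (M.b (C.i1 y2))]
    abel
  · intro y1 y2 q _
    rw [C.hi_br, C.hi_b y1, C.hi_b y2]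
    have h4 := M.ax4 (C.i1 y1) (C.i1 y2) q
    rw [M.br_skew q (C.i1 y1), map_neg, LinearMap.neg_apply] at h4
    have h5 := eq_neg_of_add_eq_zero_right h4
    rw [h5]; abel
end

section
/- Let (M, N, s, t) be a Cat¹-Hom-Lie antialgebra. Then the restriction t|_{Ker s}: Ker s → N, with the action of N on Ker s induced by the multiplication in M (ρ₀(x)(p) = x·p, ρ₁(y)(q) = [y,q], ρ₀(x)(q) = x·q, ρ₁(y)(p) = y·p), is a crossed module of Hom-Lie antialgebras. In particular, the Peiffer identities hold: for p₁, p₂ ∈ Ker s₀ and q₁, q₂ ∈ Ker s₁, t₀(p₁)·p₂ = p₁·p₂, t₀(p₁)·q₁ = p₁·q₁, t₁(q₁)·p₁ = q₁·p₁, and [t₁(q₁), q₂] = [q₁, q₂]. -/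
/-- In a `Cat¹`-Hom-Lie antialgebra `(M, N, s, t)`, the restriction
`t|_{Ker s} : Ker s → N`, with the action of `N` on `Ker s` induced by the
multiplication in `M`, is a crossed module: the equivariance conditions hold,
and in particular the Peiffer identities hold. -/
theorem t_restricted_to_kerS_is_crossedModule
    {k : Type*} [Field k] [CharZero k]
    {M0 M1 : Type*} [AddCommGroup M0] [Module k M0] [AddCommGroup M1] [Module k M1]
    {N0 N1 : Type*} [AddCommGroup N0] [Module k N0] [AddCommGroup N1] [Module k N1]
    (M : HLA k M0 M1) (N : HLA k N0 N1) (C : Cat1HLA k M N) :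
    -- equivariance: t₀(ρ₀(x)p) = x·t₀(p), etc.
    (∀ (x : N0) (p : M0), C.s0 p = 0 →
      C.t0 (M.mul (C.i0 x) p) = N.mul x (C.t0 p)) ∧
    (∀ (x : N0) (q : M1), C.s1 q = 0 →
      C.t1 (M.act (C.i0 x) q) = N.act x (C.t1 q)) ∧
    (∀ (y : N1) (p : M0), C.s0 p = 0 →
      C.t1 (M.act p (C.i1 y)) = N.act (C.t0 p) y) ∧
    (∀ (y : N1) (q : M1), C.s1 q = 0 →
      C.t0 (M.br (C.i1 y) q) = N.br y (C.t1 q)) ∧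
    -- Peiffer identities
    (∀ p1 p2 : M0, C.s0 p1 = 0 → C.s0 p2 = 0 →
      M.mul (C.i0 (C.t0 p1)) p2 = M.mul p1 p2) ∧
    (∀ (p1 : M0) (q1 : M1), C.s0 p1 = 0 → C.s1 q1 = 0 →
      M.act (C.i0 (C.t0 p1)) q1 = M.act p1 q1) ∧
    (∀ (p1 : M0) (q1 : M1), C.s0 p1 = 0 → C.s1 q1 = 0 →
      M.act p1 (C.i1 (C.t1 q1)) = M.act p1 q1) ∧
    (∀ q1 q2 : M1, C.s1 q1 = 0 → C.s1 q2 = 0 →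
      M.br (C.i1 (C.t1 q1)) q2 = M.br q1 q2) := by
  refine ⟨?_, ?_, ?_, ?_, ?_, ?_, ?_, ?_⟩
  · intro x p _
    rw [C.ht_mul, C.ht_id0]
  · intro x q _
    rw [C.ht_act, C.ht_id0]
  · intro y p _
    rw [C.ht_act, C.ht_id1]
  · intro y q _
    rw [C.ht_br, C.ht_id1]
  · intro p1 p2 hp1 hp2
    have h : M.mul p2 (p1 - C.i0 (C.t0 p1)) = 0 := by
      apply C.ker1 _ _ hp2
      simp [C.ht_id0]
    rw [map_sub] at h
    have := sub_eq_zero.mp h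
    rw [M.mul_comm' p2 p1, M.mul_comm' p2 (C.i0 (C.t0 p1))] at this
    exact this.symm
  · intro p1 q1 hp1 hq1
    have h : M.act (p1 - C.i0 (C.t0 p1)) q1 = 0 := by
      apply C.ker3 _ _ _ hq1
      simp [C.ht_id0]
    rw [map_sub, LinearMap.sub_apply] at h
    exact (sub_eq_zero.mp h).symm
  · intro p1 q1 hp1 hq1
    have h : M.act p1 (q1 - C.i1 (C.t1 q1)) = 0 := by
      apply C.ker2 _ _ hp1
      simp [C.ht_id1]
    rw [map_sub] at h
    exact (sub_eq_zero.mp h).symm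
  · intro q1 q2 hq1 hq2
    have h : M.br q2 (q1 - C.i1 (C.t1 q1)) = 0 := by
      apply C.ker4 _ _ hq2
      simp [C.ht_id1]
    rw [map_sub] at h
    have := sub_eq_zero.mp h
    rw [M.br_skew q2 q1, M.br_skew q2 (C.i1 (C.t1 q1))] at this
    exact (neg_inj.mp this).symm
end

section
/- If 𝔟 is an ideal of a Hom-Lie antialgebra (𝔞, α, β), then the inclusion map i: 𝔟 → 𝔞 together with the adjoint action of 𝔞 on 𝔟 (ρ₀(x)(b₀) = x·b₀, ρ₀(x)(b₁) = x·b₁, ρ₁(y)(b₀) = y·b₀, ρ₁(y)(b₁) = [y, b₁] for x ∈ 𝔞₀, y ∈ 𝔞₁, b₀ ∈ 𝔟₀, b₁ ∈ 𝔟₁) is a crossed module of Hom-Lie antialgebras. In particular, (𝔞, 𝔞, id) and (0, 𝔞, 0) are crossed modules. -/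
namespace HLAProof

variable {k : Type*} [Field k] [CharZero k]
    {A0 A1 : Type*} [AddCommGroup A0] [Module k A0] [AddCommGroup A1] [Module k A1]
    (L : HLA k A0 A1) (B0 : Submodule k A0) (B1 : Submodule k A1)
    (hb1 : ∀ (u x : A0), u ∈ B0 → L.mul u x ∈ B0)
    (hb2 : ∀ (u : A0) (y : A1), u ∈ B0 → L.act u y ∈ B1)
    (hb3 : ∀ (x : A0) (w : A1), w ∈ B1 → L.act x w ∈ B1)
    (hb4 : ∀ (w y : A1), w ∈ B1 → L.br w y ∈ B0)
    (hb5 : ∀ u : A0, u ∈ B0 → L.a u ∈ B0)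
    (hb6 : ∀ w : A1, w ∈ B1 → L.b w ∈ B1)

def mulB : B0 →ₗ[k] B0 →ₗ[k] B0 :=
  LinearMap.mk₂ k (fun u v => (⟨L.mul u v, hb1 _ _ u.2⟩ : B0))
    (fun m n p => Subtype.ext <| by simp)
    (fun c m n => Subtype.ext <| by simp)
    (fun m n p => Subtype.ext <| by simp)
    (fun c m n => Subtype.ext <| by simp)

@[simp] lemma mulB_coe (u v : B0) : (mulB L B0 hb1 u v : A0) = L.mul u v := rfl

def actB : B0 →ₗ[k] B1 →ₗ[k] B1 :=
  LinearMap.mk₂ k (fun u w => (⟨L.act u w, hb3 _ _ w.2⟩ : B1))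
    (fun m n p => Subtype.ext <| by simp)
    (fun c m n => Subtype.ext <| by simp)
    (fun m n p => Subtype.ext <| by simp)
    (fun c m n => Subtype.ext <| by simp)

@[simp] lemma actB_coe (u : B0) (w : B1) :
    (actB L B0 B1 hb3 u w : A1) = L.act u w := rfl

def brB : B1 →ₗ[k] B1 →ₗ[k] B0 :=
  LinearMap.mk₂ k (fun w1 w2 => (⟨L.br w1 w2, hb4 _ _ w1.2⟩ : B0))
    (fun m n p => Subtype.ext <| by simp)
    (fun c m n => Subtype.ext <| by simp)
    (fun m n p => Subtype.ext <| by simp)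
    (fun c m n => Subtype.ext <| by simp)

@[simp] lemma brB_coe (w1 w2 : B1) : (brB L B0 B1 hb4 w1 w2 : A0) = L.br w1 w2 := rfl

def aB : B0 →ₗ[k] B0 := (L.a.comp B0.subtype).codRestrict B0 (fun u => hb5 _ u.2)

@[simp] lemma aB_coe (u : B0) : (aB L B0 hb5 u : A0) = L.a u := rfl

def bB : B1 →ₗ[k] B1 := (L.b.comp B1.subtype).codRestrict B1 (fun w => hb6 _ w.2)

@[simp] lemma bB_coe (w : B1) : (bB L B1 hb6 w : A1) = L.b w := rfl

def r00B : A0 →ₗ[k] B0 →ₗ[k] B0 :=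
  LinearMap.mk₂ k (fun x u => (⟨L.mul x u, by rw [L.mul_comm']; exact hb1 _ _ u.2⟩ : B0))
    (fun m n p => Subtype.ext <| by simp)
    (fun c m n => Subtype.ext <| by simp)
    (fun m n p => Subtype.ext <| by simp)
    (fun c m n => Subtype.ext <| by simp)

@[simp] lemma r00B_coe (x : A0) (u : B0) : (r00B L B0 hb1 x u : A0) = L.mul x u := rfl

def r01B : A0 →ₗ[k] B1 →ₗ[k] B1 :=
  LinearMap.mk₂ k (fun x w => (⟨L.act x w, hb3 _ _ w.2⟩ : B1))
    (fun m n p => Subtype.ext <| by simp)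
    (fun c m n => Subtype.ext <| by simp)
    (fun m n p => Subtype.ext <| by simp)
    (fun c m n => Subtype.ext <| by simp)

@[simp] lemma r01B_coe (x : A0) (w : B1) : (r01B L B1 hb3 x w : A1) = L.act x w := rfl

def r10B : A1 →ₗ[k] B0 →ₗ[k] B1 :=
  LinearMap.mk₂ k (fun y u => (⟨L.act u y, hb2 _ _ u.2⟩ : B1))
    (fun m n p => Subtype.ext <| by simp)
    (fun c m n => Subtype.ext <| by simp)
    (fun m n p => Subtype.ext <| by simp)
    (fun c m n => Subtype.ext <| by simp)

@[simp] lemma r10B_coe (y : A1) (u : B0) :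
    (r10B L B0 B1 hb2 y u : A1) = L.act (u : A0) y := rfl

def r11B : A1 →ₗ[k] B1 →ₗ[k] B0 :=
  LinearMap.mk₂ k (fun y w => (⟨L.br y w, by
      rw [L.br_skew]; exact B0.neg_mem (hb4 _ _ w.2)⟩ : B0))
    (fun m n p => Subtype.ext <| by simp)
    (fun c m n => Subtype.ext <| by simp)
    (fun m n p => Subtype.ext <| by simp)
    (fun c m n => Subtype.ext <| by simp)

@[simp] lemma r11B_coe (y : A1) (w : B1) : (r11B L B0 B1 hb4 y w : A0) = L.br y w := rfl

def idealHLA : HLA k B0 B1 where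
  mul := mulB L B0 hb1
  act := actB L B0 B1 hb3
  br := brB L B0 B1 hb4
  a := aB L B0 hb5
  b := bB L B1 hb6
  mul_comm' x y := Subtype.ext <| by simpa using L.mul_comm' (x : A0) y
  br_skew y z := Subtype.ext <| by simpa using L.br_skew (y : A1) z
  ax1 x1 x2 x3 := Subtype.ext <| by simpa using L.ax1 (x1 : A0) x2 x3
  ax2 x1 x2 y1 := Subtype.ext <| by simpa using L.ax2 (x1 : A0) x2 y1
  ax3 x1 y1 y2 := Subtype.ext <| by simpa using L.ax3 (x1 : A0) y1 y2
  ax4 y1 y2 y3 := Subtype.ext <| by simpa using L.ax4 (y1 : A1) y2 y3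
  m1 x1 x2 := Subtype.ext <| by simpa using L.m1 (x1 : A0) x2
  m2 x y := Subtype.ext <| by simpa using L.m2 (x : A0) y
  m3 y1 y2 := Subtype.ext <| by simpa using L.m3 (y1 : A1) y2

@[simp] lemma idealHLA_mul (u v : B0) :
    ((idealHLA L B0 B1 hb1 hb3 hb4 hb5 hb6).mul u v : A0) = L.mul u v := rfl
@[simp] lemma idealHLA_act (u : B0) (w : B1) :
    ((idealHLA L B0 B1 hb1 hb3 hb4 hb5 hb6).act u w : A1) = L.act u w := rfl
@[simp] lemma idealHLA_br (w1 w2 : B1) :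
    ((idealHLA L B0 B1 hb1 hb3 hb4 hb5 hb6).br w1 w2 : A0) = L.br w1 w2 := rfl
@[simp] lemma idealHLA_a (u : B0) :
    ((idealHLA L B0 B1 hb1 hb3 hb4 hb5 hb6).a u : A0) = L.a u := rfl
@[simp] lemma idealHLA_b (w : B1) :
    ((idealHLA L B0 B1 hb1 hb3 hb4 hb5 hb6).b w : A1) = L.b w := rfl

def idealCM : HLACrossedModule k L (idealHLA L B0 B1 hb1 hb3 hb4 hb5 hb6) where
  r00 := r00B L B0 hb1
  r01 := r01B L B1 hb3
  r10 := r10B L B0 B1 hb2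
  r11 := r11B L B0 B1 hb4
  c01 x u := Subtype.ext <| by simpa using L.m1 x (u : A0)
  c02 x w := Subtype.ext <| by simpa using L.m2 x (w : A1)
  c03 y u := Subtype.ext <| by simpa using L.m2 (u : A0) y
  c04 y w := Subtype.ext <| by simpa using L.m3 y (w : A1)
  ra x1 x2 u := Subtype.ext <| by simpa using L.ax1 x1 x2 (u : A0)
  rb x1 x2 w := Subtype.ext <| by simpa using L.ax2 x1 x2 (w : A1)
  rc x1 y1 u := Subtype.ext <| by simpa using L.ax2 x1 (u : A0) y1
  rd x1 y1 u := Subtype.ext <| by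
    simp only [r10B_coe, r00B_coe, idealHLA_a, Submodule.coe_smul]
    rw [L.mul_comm' x1 (u : A0)]
    exact L.ax2 (u : A0) x1 y1
  re x1 y1 w := Subtype.ext <| by simpa using L.ax3 x1 y1 (w : A1)
  rf y1 y2 u := Subtype.ext <| by
    simp only [r00B_coe, r11B_coe, r10B_coe, idealHLA_a, AddSubgroupClass.coe_sub]
    rw [L.mul_comm', L.ax3, L.br_skew (L.b y2) (L.act (u : A0) y1)]
    abel
  rg y1 y2 w := Subtype.ext <| by
    simp only [r01B_coe, r10B_coe, r11B_coe, idealHLA_b, Submodule.coe_add,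
      NegMemClass.coe_neg]
    have h := L.ax4 y1 y2 (w : A1)
    rw [L.br_skew y1 (w : A1)]
    simp only [map_neg, LinearMap.neg_apply]
    linear_combination (norm := abel) h
  a01 x u1 u2 := Subtype.ext <| by simpa using L.ax1 x (u1 : A0) u2
  a021 x u w := Subtype.ext <| by simpa using L.ax2 x (u : A0) w
  a022 y u1 u2 := Subtype.ext <| by simpa using L.ax2 (u1 : A0) u2 y
  a023 x u w := Subtype.ext <| by
    simp only [idealHLA_act, idealHLA_a, idealHLA_b, r01B_coe, r00B_coe, Submodule.coe_smul]
    rw [L.mul_comm' x (u : A0)]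
    exact L.ax2 (u : A0) x w
  a031 x w1 w2 := Subtype.ext <| by simpa using L.ax3 x w1 (w2 : A1)
  a032 y u w := Subtype.ext <| by
    simp only [r11B_coe, r10B_coe, idealHLA_mul, idealHLA_act, idealHLA_a, idealHLA_b,
      idealHLA_br, AddSubgroupClass.coe_sub]
    rw [L.ax3 (u : A0) y (w : A1)]
    abel
  a04 y w1 w2 := Subtype.ext <| by
    simp only [r10B_coe, r11B_coe, idealHLA_act, idealHLA_b, idealHLA_br,
      AddSubgroupClass.coe_sub]
    have h := L.ax4 (w1 : A1) (w2 : A1) y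
    rw [L.br_skew y (w2 : A1)]
    simp only [map_neg, LinearMap.neg_apply]
    linear_combination (norm := abel) h
  d0 := B0.subtype
  d1 := B1.subtype
  hd1 u := rfl
  hd2 w := rfl
  hd3 u1 u2 := rfl
  hd4 u w := rfl
  hd5 w1 w2 := rfl
  cm1 x u := rfl
  cm2 x w := rfl
  cm3 y u := rfl
  cm4 y w := rfl
  p1 u1 u2 := rfl
  p2 w1 w2 := rfl
  p3 u w := rfl
  p3' u w := rfl

def adjCM : HLACrossedModule k L L where
  r00 := L.mul
  r01 := L.act
  r10 := L.act.flip
  r11 := L.br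
  c01 x u := L.m1 x u
  c02 x w := L.m2 x w
  c03 y u := by simpa using L.m2 u y
  c04 y w := L.m3 y w
  ra := L.ax1
  rb := L.ax2
  rc x1 y1 u := by simpa using L.ax2 x1 u y1
  rd x1 y1 u := by
    simp only [LinearMap.flip_apply]
    rw [L.mul_comm' x1 u]
    exact L.ax2 u x1 y1
  re := L.ax3
  rf y1 y2 u := by
    simp only [LinearMap.flip_apply]
    rw [L.mul_comm', L.ax3, L.br_skew (L.b y2) (L.act u y1)]
    abel
  rg y1 y2 w := by
    simp only [LinearMap.flip_apply]
    have h := L.ax4 y1 y2 w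
    rw [L.br_skew y1 w]
    simp only [map_neg, LinearMap.neg_apply]
    linear_combination (norm := abel) h
  a01 := L.ax1
  a021 := L.ax2
  a022 y u1 u2 := by simpa using L.ax2 u1 u2 y
  a023 x u w := by
    rw [L.mul_comm' x u]
    exact L.ax2 u x w
  a031 := L.ax3
  a032 y u w := by
    simp only [LinearMap.flip_apply]
    rw [L.ax3 u y w]
    abel
  a04 y w1 w2 := by
    simp only [LinearMap.flip_apply]
    have h := L.ax4 w1 w2 y
    rw [L.br_skew y w2]
    simp only [map_neg, LinearMap.neg_apply]
    linear_combination (norm := abel) h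
  d0 := LinearMap.id
  d1 := LinearMap.id
  hd1 u := rfl
  hd2 w := rfl
  hd3 u1 u2 := rfl
  hd4 u w := rfl
  hd5 w1 w2 := rfl
  cm1 x u := rfl
  cm2 x w := rfl
  cm3 y u := rfl
  cm4 y w := rfl
  p1 u1 u2 := rfl
  p2 w1 w2 := rfl
  p3 u w := rfl
  p3' u w := rfl

def punitHLA : HLA k PUnit PUnit where
  mul := 0
  act := 0
  br := 0
  a := 0
  b := 0
  mul_comm' _ _ := rfl
  br_skew _ _ := Subsingleton.elim _ _
  ax1 _ _ _ := rfl
  ax2 _ _ _ := Subsingleton.elim _ _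
  ax3 _ _ _ := Subsingleton.elim _ _
  ax4 _ _ _ := Subsingleton.elim _ _
  m1 _ _ := Subsingleton.elim _ _
  m2 _ _ := Subsingleton.elim _ _
  m3 _ _ := Subsingleton.elim _ _

def punitCM : HLACrossedModule k L (punitHLA (k := k)) where
  r00 := 0
  r01 := 0
  r10 := 0
  r11 := 0
  c01 _ _ := Subsingleton.elim _ _
  c02 _ _ := Subsingleton.elim _ _
  c03 _ _ := Subsingleton.elim _ _
  c04 _ _ := Subsingleton.elim _ _
  ra _ _ _ := Subsingleton.elim _ _
  rb _ _ _ := Subsingleton.elim _ _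
  rc _ _ _ := Subsingleton.elim _ _
  rd _ _ _ := Subsingleton.elim _ _
  re _ _ _ := Subsingleton.elim _ _
  rf _ _ _ := Subsingleton.elim _ _
  rg _ _ _ := Subsingleton.elim _ _
  a01 _ _ _ := Subsingleton.elim _ _
  a021 _ _ _ := Subsingleton.elim _ _
  a022 _ _ _ := Subsingleton.elim _ _
  a023 _ _ _ := Subsingleton.elim _ _
  a031 _ _ _ := Subsingleton.elim _ _
  a032 _ _ _ := Subsingleton.elim _ _
  a04 _ _ _ := Subsingleton.elim _ _
  d0 := 0
  d1 := 0
  hd1 _ := by simp [punitHLA]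
  hd2 _ := by simp [punitHLA]
  hd3 _ _ := by simp [punitHLA]
  hd4 _ _ := by simp [punitHLA]
  hd5 _ _ := by simp [punitHLA]
  cm1 _ _ := by simp
  cm2 _ _ := by simp
  cm3 _ _ := by simp
  cm4 _ _ := by simp
  p1 _ _ := Subsingleton.elim _ _
  p2 _ _ := Subsingleton.elim _ _
  p3 _ _ := Subsingleton.elim _ _
  p3' _ _ := Subsingleton.elim _ _

end HLAProof

/-- If `𝔟 = (B0, B1)` is an ideal of a Hom-Lie antialgebra `(𝔞, α, β)`, then the
inclusion `i : 𝔟 → 𝔞` together with the adjoint action of `𝔞` on `𝔟` is a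
crossed module of Hom-Lie antialgebras.  In particular, `(𝔞, 𝔞, id)` (with the
adjoint action) and `(0, 𝔞, 0)` are crossed modules. -/
theorem ideal_inclusion_is_crossedModule
    {k : Type*} [Field k] [CharZero k]
    {A0 A1 : Type*} [AddCommGroup A0] [Module k A0] [AddCommGroup A1] [Module k A1]
    (L : HLA k A0 A1) (B0 : Submodule k A0) (B1 : Submodule k A1)
    (hb1 : ∀ (u x : A0), u ∈ B0 → L.mul u x ∈ B0)
    (hb2 : ∀ (u : A0) (y : A1), u ∈ B0 → L.act u y ∈ B1)
    (hb3 : ∀ (x : A0) (w : A1), w ∈ B1 → L.act x w ∈ B1)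
    (hb4 : ∀ (w y : A1), w ∈ B1 → L.br w y ∈ B0)
    (hb5 : ∀ u : A0, u ∈ B0 → L.a u ∈ B0)
    (hb6 : ∀ w : A1, w ∈ B1 → L.b w ∈ B1) :
    (∃ (LB : HLA k B0 B1) (C : HLACrossedModule k L LB),
      (∀ u : B0, C.d0 u = (u : A0)) ∧
      (∀ w : B1, C.d1 w = (w : A1)) ∧
      (∀ u1 u2 : B0, ((LB.mul u1 u2 : B0) : A0) = L.mul u1 u2) ∧
      (∀ (u : B0) (w : B1), ((LB.act u w : B1) : A1) = L.act u w) ∧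
      (∀ w1 w2 : B1, ((LB.br w1 w2 : B0) : A0) = L.br w1 w2) ∧
      (∀ u : B0, ((LB.a u : B0) : A0) = L.a u) ∧
      (∀ w : B1, ((LB.b w : B1) : A1) = L.b w) ∧
      (∀ (x : A0) (u : B0), ((C.r00 x u : B0) : A0) = L.mul x u) ∧
      (∀ (x : A0) (w : B1), ((C.r01 x w : B1) : A1) = L.act x w) ∧
      (∀ (y : A1) (u : B0), ((C.r10 y u : B1) : A1) = L.act (u : A0) y) ∧
      (∀ (y : A1) (w : B1), ((C.r11 y w : B0) : A0) = L.br y w)) ∧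
    -- (𝔞, 𝔞, id) is a crossed module with the adjoint action
    (∃ C : HLACrossedModule k L L,
      C.d0 = LinearMap.id ∧ C.d1 = LinearMap.id ∧
      (∀ x u : A0, C.r00 x u = L.mul x u) ∧
      (∀ (x : A0) (w : A1), C.r01 x w = L.act x w) ∧
      (∀ (y : A1) (u : A0), C.r10 y u = L.act u y) ∧
      (∀ y w : A1, C.r11 y w = L.br y w)) ∧
    -- (0, 𝔞, 0) is a crossed module
    (∃ (LZ : HLA k PUnit PUnit) (C : HLACrossedModule k L LZ),
      C.d0 = 0 ∧ C.d1 = 0) := by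
  refine ⟨⟨HLAProof.idealHLA L B0 B1 hb1 hb3 hb4 hb5 hb6, ?_⟩, ?_, ?_⟩
  · exact ⟨HLAProof.idealCM L B0 B1 hb1 hb2 hb3 hb4 hb5 hb6,
      fun u => rfl, fun w => rfl, fun u1 u2 => rfl, fun u w => rfl, fun w1 w2 => rfl,
      fun u => rfl, fun w => rfl, fun x u => rfl, fun x w => rfl, fun y u => rfl,
      fun y w => rfl⟩
  · exact ⟨HLAProof.adjCM L, rfl, rfl, fun x u => rfl, fun x w => rfl, fun y u => rfl,
      fun y w => rfl⟩
  · exact ⟨HLAProof.punitHLA (k := k), HLAProof.punitCM L, rfl, rfl⟩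
end
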